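/- arXiv:1310.0298 — 9 statements merged into one kernel-verified Lean document; each statement's English description precedes it below -/
import Mathlib

section
/- Let r, s, k₁, k₂, n₁, n₂, n₃ be integers with k₁, k₂, r positive, and suppose n₁/k₁ + n₃/(r·k₁) = n₂/k₂ + s·n₃/(r·k₂) = ν (as rational numbers). If gcd(k₁, k₂) = 1 and gcd(r, k₂ - s·k₁) = 1, then ν is an integer. -/
/-! The two defining equations say that `ν r k₁ = r n₁ + n₃` and `ν r k₂ = r n₂ + s n₃` are
integers; as `k₁, k₂` are coprime, Bézout makes `t = ν r` an integer. Eliminating `n₃` gives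
`t (k₂ - s k₁) = r (n₂ - s n₁)`, so `r ∣ t` by the second coprimality and `ν = t / r ∈ ℤ`. -/

theorem exists_intCast_eq_of_isCoprime {K : Type*} [CommRing K] {q : K} {a b m n : ℤ}
    (hab : IsCoprime a b) (ha : q * a = m) (hb : q * b = n) : ∃ t : ℤ, q = t := by
  obtain ⟨u, v, huv⟩ := hab
  refine ⟨u * m + v * n, ?_⟩
  have huvK : (u : K) * a + v * b = 1 := by simpa using congrArg (Int.cast : ℤ → K) huv
  push_cast
  linear_combination (u : K) * ha + v * hb - q * huvK

theorem IsCoprime.dvd_of_mul_eq_add_of_mul_eq_add {R : Type*} [CommRing R]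
    {r s t k₁ k₂ n₁ n₂ n₃ : R} (hcop : IsCoprime r (k₂ - s * k₁))
    (h₁ : t * k₁ = r * n₁ + n₃) (h₂ : t * k₂ = r * n₂ + s * n₃) : r ∣ t := by
  have key : t * (k₂ - s * k₁) = r * (n₂ - s * n₁) := by linear_combination h₂ - s * h₁
  exact hcop.dvd_of_dvd_mul_right ⟨_, key⟩

/-- Lemma 3.7(i) of Podvigina–Chossat: if `n₁/k₁ + n₃/(r k₁) = n₂/k₂ + s n₃/(r k₂) = ν`
with `gcd(k₁,k₂) = 1` and `gcd(r, k₂ - s k₁) = 1`, then `ν` is an integer. -/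
theorem stmt_0 (r s k₁ k₂ n₁ n₂ n₃ : ℤ) (ν : ℚ)
    (hr : 0 < r) (hk₁ : 0 < k₁) (hk₂ : 0 < k₂)
    (h1 : (n₁ : ℚ) / (k₁ : ℚ) + (n₃ : ℚ) / ((r : ℚ) * (k₁ : ℚ)) = ν)
    (h2 : (n₂ : ℚ) / (k₂ : ℚ) + (s : ℚ) * (n₃ : ℚ) / ((r : ℚ) * (k₂ : ℚ)) = ν)
    (hgcd1 : Int.gcd k₁ k₂ = 1)
    (hgcd2 : Int.gcd r (k₂ - s * k₁) = 1) :
    ∃ m : ℤ, ν = (m : ℚ) := by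
  have hrQ : (r : ℚ) ≠ 0 := by exact_mod_cast hr.ne'
  have hk₁Q : (k₁ : ℚ) ≠ 0 := by exact_mod_cast hk₁.ne'
  have hk₂Q : (k₂ : ℚ) ≠ 0 := by exact_mod_cast hk₂.ne'
  have e₁ : ν * r * k₁ = ((r * n₁ + n₃ : ℤ) : ℚ) := by rw [← h1]; push_cast; field_simp
  have e₂ : ν * r * k₂ = ((r * n₂ + s * n₃ : ℤ) : ℚ) := by rw [← h2]; push_cast; field_simp
  obtain ⟨t, ht⟩ :=
    exists_intCast_eq_of_isCoprime (Int.isCoprime_iff_gcd_eq_one.mpr hgcd1) e₁ e₂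
  rw [ht] at e₁ e₂
  obtain ⟨m, rfl⟩ := (Int.isCoprime_iff_gcd_eq_one.mpr hgcd2).dvd_of_mul_eq_add_of_mul_eq_add
    (t := t) (by exact_mod_cast e₁) (by exact_mod_cast e₂)
  refine ⟨m, mul_right_cancel₀ hrQ ?_⟩
  rw [ht]; push_cast; ring
end

section
/- The map Φ from the product of the group of unit quaternions with itself to the orthogonal group of ℍ (as a 4-dimensional real inner product space), sending (l, r) to the map q ↦ l * q * r⁻¹, is a group homomorphism whose kernel is {(1,1), (-1,-1)}. -/
/-!
Since the norm of a normed division algebra is multiplicative, `q ↦ l q r⁻¹` is an isometry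
for unit `l, r`, and these maps compose like the pairs `(l, r)`. If `l q r⁻¹ = q` for all `q`,
then `q = 1` gives `l = r`, so `l` is central; the centre of `ℍ` is `ℝ`, whose unit elements
are `±1`.
-/

open Quaternion Metric

section MulLeftRight

variable (𝕜 : Type*) {D : Type*} [NormedField 𝕜] [NormedDivisionRing D] [NormedAlgebra 𝕜 D]

noncomputable def mulLeftRightIsometry :
    sphere (0 : D) 1 × sphere (0 : D) 1 →* (D ≃ₗᵢ[𝕜] D) where
  toFun p :=
    { toFun q := p.1 * q * (p.2 : D)⁻¹
      invFun q := (p.1 : D)⁻¹ * q * p.2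
      map_add' x y := by simp only [mul_add, add_mul]
      map_smul' c x := by simp
      left_inv x := by simp [mul_assoc, ne_zero_of_mem_unit_sphere]
      right_inv x := by simp [mul_assoc, ne_zero_of_mem_unit_sphere]
      norm_map' x := by simp [norm_mul, norm_inv] }
  map_one' := by ext; simp
  map_mul' p p' := by ext; simp [mul_assoc]

variable {𝕜}

@[simp]
theorem mulLeftRightIsometry_apply (p : sphere (0 : D) 1 × sphere (0 : D) 1) (q : D) :
    mulLeftRightIsometry 𝕜 p q = p.1 * q * (p.2 : D)⁻¹ :=
  rfl

theorem mem_ker_mulLeftRightIsometry_iff (p : sphere (0 : D) 1 × sphere (0 : D) 1) :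
    p ∈ (mulLeftRightIsometry 𝕜).ker ↔ (p.1 : D) = p.2 ∧ ∀ q : D, p.1 * q = q * p.1 := by
  have hr : (p.2 : D) ≠ 0 := ne_zero_of_mem_unit_sphere p.2
  rw [MonoidHom.mem_ker, LinearIsometryEquiv.ext_iff]
  simp only [mulLeftRightIsometry_apply, LinearIsometryEquiv.coe_one, id_eq]
  constructor
  · intro h
    have hlr : (p.1 : D) = p.2 := by simpa [mul_inv_eq_one₀ hr] using h 1
    refine ⟨hlr, fun q => ?_⟩
    calc (p.1 : D) * q = p.1 * q * (p.2 : D)⁻¹ * p.2 := (inv_mul_cancel_right₀ hr _).symm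
      _ = q * p.1 := by rw [h, hlr]
  · rintro ⟨hlr, hc⟩ q
    rw [hc, ← hlr, mul_assoc, mul_inv_cancel₀ (hlr ▸ hr), mul_one]

end MulLeftRight

namespace Quaternion

theorem eq_coe_re_of_forall_mul_comm {R : Type*} [CommRing R] [NoZeroDivisors R] [CharZero R]
    {x : ℍ[R]} (h : ∀ q : ℍ[R], x * q = q * x) : x = x.re := by
  -- anonymous-constructor literals of type `ℍ[R]` defeat `simp`, so `i` and `j` are named
  obtain ⟨i, hi⟩ : ∃ i : ℍ[R], i.re = 0 ∧ i.imI = 1 ∧ i.imJ = 0 ∧ i.imK = 0 :=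
    ⟨⟨0, 1, 0, 0⟩, rfl, rfl, rfl, rfl⟩
  obtain ⟨j, hj⟩ : ∃ j : ℍ[R], j.re = 0 ∧ j.imI = 0 ∧ j.imJ = 1 ∧ j.imK = 0 :=
    ⟨⟨0, 0, 1, 0⟩, rfl, rfl, rfl, rfl⟩
  have hxiJ := congrArg QuaternionAlgebra.imJ (h i)
  have hxiK := congrArg QuaternionAlgebra.imK (h i)
  have hxjK := congrArg QuaternionAlgebra.imK (h j)
  simp only [imJ_mul, imK_mul, hi, hj] at hxiJ hxiK hxjK
  ext
  · simp
  · simpa using self_eq_neg.1 (by linear_combination hxjK)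
  · simpa using self_eq_neg.1 (by linear_combination -hxiK)
  · simpa using self_eq_neg.1 (by linear_combination hxiJ)

theorem eq_one_or_eq_neg_one_of_forall_mul_comm {x : ℍ[ℝ]} (hx : ‖x‖ = 1)
    (h : ∀ q : ℍ[ℝ], x * q = q * x) : x = 1 ∨ x = -1 := by
  rw [eq_coe_re_of_forall_mul_comm h, norm_coe, Real.norm_eq_abs] at hx
  rw [eq_coe_re_of_forall_mul_comm h]
  rcases abs_eq zero_le_one |>.1 hx with h1 | h1 <;> simp [h1]

end Quaternion

/-- The map `Φ` from pairs of unit quaternions to the group of linear isometries of `ℍ`,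
`(l, r) ↦ (q ↦ l q r⁻¹)`, is a group homomorphism with kernel `{(1,1), (-1,-1)}`. -/
theorem stmt_3 :
    ∃ Φ : (Metric.sphere (0 : ℍ[ℝ]) 1 × Metric.sphere (0 : ℍ[ℝ]) 1) →*
        (ℍ[ℝ] ≃ₗᵢ[ℝ] ℍ[ℝ]),
      (∀ (l r : Metric.sphere (0 : ℍ[ℝ]) 1) (q : ℍ[ℝ]),
          Φ (l, r) q = (l : ℍ[ℝ]) * q * (r : ℍ[ℝ])⁻¹) ∧
      (∀ p : Metric.sphere (0 : ℍ[ℝ]) 1 × Metric.sphere (0 : ℍ[ℝ]) 1,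
          p ∈ Φ.ker ↔
            ((p.1 : ℍ[ℝ]) = 1 ∧ (p.2 : ℍ[ℝ]) = 1) ∨
            ((p.1 : ℍ[ℝ]) = -1 ∧ (p.2 : ℍ[ℝ]) = -1)) := by
  refine ⟨mulLeftRightIsometry ℝ, fun l r q => rfl, fun p => ?_⟩
  rw [mem_ker_mulLeftRightIsometry_iff]
  constructor
  · rintro ⟨hlr, hcentral⟩
    rcases eq_one_or_eq_neg_one_of_forall_mul_comm (norm_eq_of_mem_sphere p.1) hcentral with h | h
    · exact .inl ⟨h, hlr ▸ h⟩
    · exact .inr ⟨h, hlr ▸ h⟩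
  · rintro (⟨h1, h2⟩ | ⟨h1, h2⟩) <;> simp [h1, h2]
end

section
/- Let l and r be unit quaternions and suppose the linear map T : ℍ → ℍ, q ↦ l * q * r⁻¹, satisfies T ∘ T = id and T ≠ id and T ≠ -id. Then l² = -1 and r² = -1. -/
/-!
Applying `T` twice gives `l² q r⁻² = q` for every `q`. At `q = 1` this says `r⁻² = (l²)⁻¹`, and then
`l² q = q l²` for all `q`: the square `l²` is central in `ℍ`, hence real, and it has norm one, so
`l² = r² = ±1`. If `l² = 1` then `l, r ∈ {1, -1}` and `T = ±id`.
-/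

open Quaternion

section GroupWithZero

variable {G₀ : Type*} [GroupWithZero G₀] {a b : G₀}

theorem eq_inv_of_forall_mul_mul_eq (h : ∀ q, a * q * b = q) : b = a⁻¹ :=
  eq_inv_of_mul_eq_one_right (by simpa using h 1)

theorem commute_of_forall_mul_mul_eq (h : ∀ q, a * q * b = q) (q : G₀) : Commute a q := by
  have ha : a ≠ 0 := left_ne_zero_of_mul_eq_one (by simpa using h 1)
  have hq := h q
  rwa [eq_inv_of_forall_mul_mul_eq h, mul_inv_eq_iff_eq_mul₀ ha] at hq

end GroupWithZero

theorem forall_mul_mul_inv_eq_or_eq_neg {D : Type*} [DivisionRing D] {l r : D}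
    (hl : l = 1 ∨ l = -1) (hr : r = 1 ∨ r = -1) :
    (∀ q, l * q * r⁻¹ = q) ∨ ∀ q, l * q * r⁻¹ = -q := by
  rcases hl with rfl | rfl <;> rcases hr with rfl | rfl <;> simp

namespace Quaternion

open scoped CharZero in
theorem eq_coe_re_of_forall_commute {R : Type*} [CommRing R] [NoZeroDivisors R] [CharZero R]
    {c : ℍ[R]} (h : ∀ q, Commute c q) : c = (c.re : ℍ[R]) := by
  -- Commuting with `i` kills the `j`- and `k`-parts, commuting with `j` kills the `i`-part.
  have hiJ := (imJ_mul c ⟨0, 1, 0, 0⟩).symm.trans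
    ((congrArg (·.imJ) (h ⟨0, 1, 0, 0⟩).eq).trans (imJ_mul _ c))
  have hiK := (imK_mul c ⟨0, 1, 0, 0⟩).symm.trans
    ((congrArg (·.imK) (h ⟨0, 1, 0, 0⟩).eq).trans (imK_mul _ c))
  have hjK := (imK_mul c ⟨0, 0, 1, 0⟩).symm.trans
    ((congrArg (·.imK) (h ⟨0, 0, 1, 0⟩).eq).trans (imK_mul _ c))
  simp only [mul_zero, sub_self, add_zero, mul_one, zero_add, zero_mul, one_mul, zero_sub,
    sub_zero, CharZero.eq_neg_self_iff, CharZero.neg_eq_self_iff] at hiJ hiK hjK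
  ext <;> simp [hiJ, hiK, hjK]

theorem eq_one_or_eq_neg_one_of_forall_commute {c : ℍ[ℝ]} (hc : ‖c‖ = 1)
    (h : ∀ q, Commute c q) : c = 1 ∨ c = -1 := by
  rw [eq_coe_re_of_forall_commute h, norm_coe, Real.norm_eq_abs, abs_eq zero_le_one] at hc
  rw [eq_coe_re_of_forall_commute h]
  rcases hc with hc | hc <;> simp [hc]

end Quaternion

theorem stmt_4_general (l r : ℍ[ℝ]) (hl : ‖l‖ = 1)
    (T : ℍ[ℝ] → ℍ[ℝ]) (hT : ∀ q, T q = l * q * r⁻¹)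
    (hT2 : T ∘ T = id) (hTid : T ≠ id) (hTneg : T ≠ fun q => -q) :
    l ^ 2 = -1 ∧ r ^ 2 = -1 := by
  have hinvol : ∀ q, l ^ 2 * q * r⁻¹ ^ 2 = q := fun q => by
    simpa [hT, pow_two, mul_assoc] using congrFun hT2 q
  have hr : r ^ 2 = l ^ 2 := by
    rw [← inv_inj, ← inv_pow, eq_inv_of_forall_mul_mul_eq hinvol]
  have hnorm : ‖l ^ 2‖ = 1 := by rw [norm_pow, hl, one_pow]
  rcases Quaternion.eq_one_or_eq_neg_one_of_forall_commute hnorm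
    (commute_of_forall_mul_mul_eq hinvol) with h | h
  · exfalso
    rcases forall_mul_mul_inv_eq_or_eq_neg (sq_eq_one_iff.mp h) (sq_eq_one_iff.mp (hr.trans h))
      with hid | hneg
    · exact hTid (funext fun q => (hT q).trans (hid q))
    · exact hTneg (funext fun q => (hT q).trans (hneg q))
  · exact ⟨h, hr.trans h⟩

/-- If for unit quaternions `l, r` the map `T q = l q r⁻¹` is an involution distinct from
`±id`, then `l² = -1` and `r² = -1`. -/
theorem stmt_4 (l r : ℍ[ℝ]) (hl : ‖l‖ = 1) (hr : ‖r‖ = 1)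
    (T : ℍ[ℝ] → ℍ[ℝ]) (hT : ∀ q, T q = l * q * r⁻¹)
    (hT2 : T ∘ T = id) (hTid : T ≠ id) (hTneg : T ≠ fun q => -q) :
    l ^ 2 = -1 ∧ r ^ 2 = -1 :=
  stmt_4_general l r hl T hT hT2 hTid hTneg
end

section
/- Let l and r be purely imaginary unit quaternions. Then the fixed-point subspace of the linear map q ↦ l * q * r⁻¹ on ℍ is a 2-dimensional real subspace. -/
/-!
The map `T q = l q r⁻¹` is an involution, since `l² = -1` and `(r⁻¹)² = -1` for purely imaginary
unit quaternions. For an involution, `(1 + T) / 2` projects onto the fixed space, so its trace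
gives `2 · dim Fix T = dim ℍ + tr T`. Finally `tr (q ↦ a q b) = 4 re(a) re(b)`, which vanishes
as `re l = 0`; hence `dim Fix T = 2`.
-/

open Quaternion Module

theorem LinearMap.two_mul_finrank_ker_sub_id_of_involutive {K V : Type*} [Field K]
    [AddCommGroup V] [Module K V] [FiniteDimensional K V] (h2 : (2 : K) ≠ 0)
    {T : V →ₗ[K] V} (hT : Function.Involutive T) :
    2 * (finrank K (ker (T - id)) : K) = finrank K V + trace K V T := by
  have hproj : IsProj (ker (T - id)) ((2⁻¹ : K) • (id + T)) := by
    constructor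
    · intro x
      simp [hT x, add_comm]
    · intro x hx
      rw [mem_ker, sub_apply, id_apply, sub_eq_zero] at hx
      rw [smul_apply, add_apply, id_apply, hx, ← two_smul K x, smul_smul, inv_mul_cancel₀ h2,
        one_smul]
  rw [← hproj.trace, map_smul, map_add, trace_id, smul_eq_mul, ← mul_assoc,
    mul_inv_cancel₀ h2, one_mul]

theorem involutive_mul_mul_of_mul_self_eq_neg_one {A : Type*} [Ring A] {a b : A}
    (ha : a * a = -1) (hb : b * b = -1) : Function.Involutive fun q => a * q * b := fun q => by
  calc a * (a * q * b) * b = a * a * q * (b * b) := by noncomm_ring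
    _ = q := by rw [ha, hb]; noncomm_ring

namespace Quaternion

theorem mul_self_eq_neg_one_of_re_eq_zero {R : Type*} [CommRing R] [LinearOrder R]
    [IsStrictOrderedRing R] {u : ℍ[R]} (hre : u.re = 0) (hnorm : normSq u = 1) :
    u * u = -1 := by
  rw [← sq, sq_eq_neg_normSq.2 hre, hnorm, coe_one]

theorem trace_mulLeft_comp_mulRight {R : Type*} [CommRing R] (a b : ℍ[R]) :
    LinearMap.trace R ℍ[R] (LinearMap.mulLeft R a ∘ₗ LinearMap.mulRight R b) =
      4 * a.re * b.re := by
  -- `ℍ[R]` is a type synonym of `ℍ[R,-1,0,-1]`; fixing the type of `e` keeps `rw` on `ℍ[R]`.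
  obtain ⟨e, he⟩ : ∃ e : ℍ[R] ≃ₗ[R] (Fin 4 → R),
      e = QuaternionAlgebra.linearEquivTuple (-1) 0 (-1) := ⟨_, rfl⟩
  have he_apply (q : ℍ[R]) : e q = ![q.re, q.imI, q.imJ, q.imK] := by subst he; rfl
  have he_symm (v : Fin 4 → R) : (e.symm v).re = v 0 ∧ (e.symm v).imI = v 1 ∧
      (e.symm v).imJ = v 2 ∧ (e.symm v).imK = v 3 := by subst he; exact ⟨rfl, rfl, rfl, rfl⟩
  rw [← LinearMap.trace_conj' _ e, LinearMap.trace_eq_matrix_trace R (Pi.basisFun R (Fin 4)),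
    LinearMap.toMatrix_eq_toMatrix', Matrix.trace, Fin.sum_univ_four]
  simp [LinearMap.toMatrix'_apply, LinearEquiv.conj_apply, he_apply, he_symm, re_mul, imI_mul,
    imJ_mul, imK_mul]
  ring

end Quaternion

/-- For purely imaginary unit quaternions `l, r`, the fixed-point subspace of
`q ↦ l q r⁻¹` is a 2-dimensional real subspace of `ℍ`. -/
theorem stmt_6 (l r : ℍ[ℝ]) (hl0 : l.re = 0) (hl1 : ‖l‖ = 1)
    (hr0 : r.re = 0) (hr1 : ‖r‖ = 1)
    (T : ℍ[ℝ] →ₗ[ℝ] ℍ[ℝ]) (hT : ∀ q, T q = l * q * r⁻¹) :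
    Module.finrank ℝ ↥(LinearMap.ker (T - LinearMap.id)) = 2 := by
  have hl : l * l = -1 :=
    mul_self_eq_neg_one_of_re_eq_zero hl0 (by rw [normSq_eq_norm_mul_self, hl1, one_mul])
  have hr : r⁻¹ * r⁻¹ = -1 := by
    rw [← mul_inv_rev, mul_self_eq_neg_one_of_re_eq_zero hr0
      (by rw [normSq_eq_norm_mul_self, hr1, one_mul]), inv_neg, inv_one]
  have hinv : Function.Involutive T :=
    funext hT ▸ involutive_mul_mul_of_mul_self_eq_neg_one hl hr
  have htrace : LinearMap.trace ℝ ℍ[ℝ] T = 0 := by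
    rw [show T = LinearMap.mulLeft ℝ l ∘ₗ LinearMap.mulRight ℝ r⁻¹ from
      LinearMap.ext fun q => by simp [hT, mul_assoc], trace_mulLeft_comp_mulRight, hl0]
    ring
  have hdim := LinearMap.two_mul_finrank_ker_sub_id_of_involutive two_ne_zero hinv
  rw [htrace, finrank_eq_four, Nat.cast_ofNat, add_zero] at hdim
  exact_mod_cast (by linarith : (finrank ℝ (LinearMap.ker (T - LinearMap.id)) : ℝ) = 2)
end

section
/- Let l and r be purely imaginary unit quaternions, and let T : ℍ → ℍ be the map q ↦ l * q * r⁻¹. Then T acts as minus the identity on the orthogonal complement of its fixed-point subspace. -/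
/-!
A pure unit quaternion `u` satisfies `u * u = -1` and `star u = u⁻¹ = -u`. Hence
`T q = l q r⁻¹` is an involution, and since `⟪a x b, y⟫ = ⟪x, star a * y * star b⟫` it is
self-adjoint. A self-adjoint involution is `-1` on the orthogonal complement of its fixed space.
-/

open Quaternion RealInnerProductSpace

/-- `x + T x` is fixed by `T`, and symmetry of `T` makes it orthogonal to itself as soon as `x`
is orthogonal to the fixed vectors. -/
theorem LinearMap.IsSymmetric.apply_eq_neg_of_mem_orthogonal_ker_sub_id {𝕜 E : Type*} [RCLike 𝕜]
    [NormedAddCommGroup E] [InnerProductSpace 𝕜 E] {T : E →ₗ[𝕜] E} (hT : T.IsSymmetric)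
    (hTT : ∀ x, T (T x) = x) {x : E} (hx : x ∈ (LinearMap.ker (T - LinearMap.id))ᗮ) :
    T x = -x := by
  set p := x + T x
  have hp_fixed : T p = p := by rw [map_add, hTT, add_comm]
  have hxp : inner 𝕜 x p = 0 :=
    Submodule.inner_left_of_mem_orthogonal (by simp [hp_fixed]) hx
  have hpp : inner 𝕜 p p = 0 := by
    calc inner 𝕜 p p = inner 𝕜 x p + inner 𝕜 x (T p) := by rw [inner_add_left, hT]
      _ = 0 := by rw [hp_fixed, hxp, add_zero]
  exact eq_neg_of_add_eq_zero_right (inner_self_eq_zero.mp hpp)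

namespace Quaternion

theorem re_mul_comm {R : Type*} [CommRing R] (a b : ℍ[R]) : (a * b).re = (b * a).re := by
  simp only [re_mul]
  ring

theorem inner_mul_mul_left (a b x y : ℍ[ℝ]) : ⟪a * x * b, y⟫ = ⟪x, star a * y * star b⟫ := by
  simp only [inner_def, star_mul, star_star]
  rw [show a * x * b * star y = a * (x * b * star y) by noncomm_ring, re_mul_comm]
  simp only [mul_assoc]

section PureUnit

variable {u : ℍ[ℝ]} (h0 : u.re = 0) (h1 : ‖u‖ = 1)
include h0 h1

theorem mul_self_eq_neg_one_of_re_eq_zero_s7 : u * u = -1 := by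
  rw [← sq, sq_eq_neg_normSq.mpr h0, normSq_eq_norm_mul_self, h1, mul_one, coe_one]

theorem inv_eq_neg_of_re_eq_zero : u⁻¹ = -u :=
  inv_eq_of_mul_eq_one_right <| by rw [mul_neg, mul_self_eq_neg_one_of_re_eq_zero_s7 h0 h1, neg_neg]

end PureUnit

end Quaternion

/-- For purely imaginary unit quaternions `l, r`, the map `T : q ↦ l q r⁻¹` acts as `-id` on
the orthogonal complement of its fixed-point subspace. -/
theorem stmt_7 (l r : ℍ[ℝ]) (hl0 : l.re = 0) (hl1 : ‖l‖ = 1)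
    (hr0 : r.re = 0) (hr1 : ‖r‖ = 1)
    (T : ℍ[ℝ] →ₗ[ℝ] ℍ[ℝ]) (hT : ∀ q, T q = l * q * r⁻¹) :
    ∀ q ∈ (LinearMap.ker (T - LinearMap.id))ᗮ, T q = -q := by
  have hr_inv := inv_eq_neg_of_re_eq_zero hr0 hr1
  have hT_symm : T.IsSymmetric := fun x y => by
    rw [hT, hT, inner_mul_mul_left, star_eq_neg.mpr hl0, hr_inv, star_neg, star_eq_neg.mpr hr0]
    noncomm_ring
  have hTT : ∀ q, T (T q) = q := fun q => by
    rw [hT, hT, hr_inv]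
    calc l * (l * q * -r) * -r = (l * l) * q * (r * r) := by noncomm_ring
      _ = q := by
        rw [mul_self_eq_neg_one_of_re_eq_zero_s7 hl0 hl1, mul_self_eq_neg_one_of_re_eq_zero_s7 hr0 hr1]
        noncomm_ring
  exact fun q hq => hT_symm.apply_eq_neg_of_mem_orthogonal_ker_sub_id hTT hq
end

section
/- Let l₁, r₁, l₂, r₂ be purely imaginary unit quaternions, and let Tᵢ : ℍ → ℍ be the maps q ↦ lᵢ * q * rᵢ⁻¹ for i = 1, 2, with fixed-point subspaces N₁ and N₂. If the real part of l₁ * l₂ equals the real part of r₁ * r₂, then N₁ ∩ N₂ ≠ {0}. -/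
/-!
Write `Tᵢ q = lᵢ q rᵢ⁻¹`. Since `lᵢ² = rᵢ² = -1`, each `Tᵢ` is an involution, and
`T₁ T₂ q = (l₁ l₂) q (r₁ r₂)⁻¹`. The unit quaternions `l₁ l₂` and `r₁ r₂` have the same real part,
hence are conjugate, so `T₁ T₂` fixes some `s ≠ 0`; then `T₂ s = T₁ s` and `s + T₁ s` is fixed by
both involutions. If `s + T₁ s = 0`, then `s` lies in both `(-1)`-eigenspaces, and right
multiplication by a nonzero pure quaternion anticommuting with `r₁` and `r₂` moves it into both
fixed spaces.
-/

open Quaternion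

namespace Quaternion

section CommRing

variable {R : Type*} [CommRing R] [NoZeroDivisors R] [CharZero R]

lemma mul_self_eq_neg_normSq {a : ℍ[R]} (ha : a.re = 0) : a * a = -((normSq a : R) : ℍ[R]) := by
  rw [← self_mul_star, star_eq_neg.2 ha, mul_neg, neg_neg]

lemma mul_eq_neg_mul_of_re_mul_eq_zero {x r : ℍ[R]} (hx : x.re = 0) (hr : r.re = 0)
    (h : (x * r).re = 0) : x * r = -(r * x) := by
  have h' := self_add_star (x * r)
  rw [star_mul, star_eq_neg.2 hx, star_eq_neg.2 hr, neg_mul_neg, h, coe_zero, mul_zero] at h'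
  exact eq_neg_of_add_eq_zero_left h'

end CommRing

lemma mul_self_eq_neg_one {a : ℍ[ℝ]} (ha : a.re = 0) (h1 : ‖a‖ = 1) : a * a = -1 := by
  rw [mul_self_eq_neg_normSq ha, normSq_eq_norm_mul_self, h1, mul_one, coe_one]

lemma exists_ne_zero_re_eq_zero_re_mul_eq_zero (r s : ℍ[ℝ]) :
    ∃ x : ℍ[ℝ], x ≠ 0 ∧ x.re = 0 ∧ (x * r).re = 0 ∧ (x * s).re = 0 := by
  let re : ℍ[ℝ] →ₗ[ℝ] ℝ := QuaternionAlgebra.reₗ _ _ _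
  let F : ℍ[ℝ] →ₗ[ℝ] ℝ × ℝ × ℝ :=
    re.prod ((re ∘ₗ LinearMap.mulRight ℝ r).prod (re ∘ₗ LinearMap.mulRight ℝ s))
  have hF : LinearMap.ker F ≠ ⊥ :=
    LinearMap.ker_ne_bot_of_finrank_lt (by simp [finrank_eq_four])
  obtain ⟨x, hx, hx0⟩ := Submodule.exists_mem_ne_zero_of_ne_bot hF
  have hx' : (x.re, (x * r).re, (x * s).re) = (0, 0, 0) := LinearMap.mem_ker.1 hx
  simp only [Prod.mk.injEq] at hx'
  exact ⟨x, hx0, hx'⟩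

/-- Pure quaternions of equal norm are conjugate: `α (α + β) = α² + α β = (α + β) β`, and when
`α + β = 0` any pure quaternion orthogonal to `α` conjugates `α` to `-α`. -/
lemma exists_ne_zero_mul_eq_mul_of_re_eq_zero {α β : ℍ[ℝ]} (hα : α.re = 0) (hβ : β.re = 0)
    (hn : normSq α = normSq β) : ∃ s ≠ 0, α * s = s * β := by
  by_cases hs : α + β = 0
  · obtain ⟨x, hx0, hxre, hxα, -⟩ := exists_ne_zero_re_eq_zero_re_mul_eq_zero α 0
    refine ⟨x, hx0, ?_⟩
    rw [eq_neg_of_add_eq_zero_right hs, mul_neg, mul_eq_neg_mul_of_re_mul_eq_zero hxre hα hxα,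
      neg_neg]
  · refine ⟨α + β, hs, ?_⟩
    rw [mul_add, add_mul, mul_self_eq_neg_normSq hα, mul_self_eq_neg_normSq hβ, hn, add_comm]

lemma exists_ne_zero_mul_eq_mul_of_re_eq {a b : ℍ[ℝ]} (hre : a.re = b.re)
    (hn : normSq a = normSq b) : ∃ s ≠ 0, a * s = s * b := by
  have hnim : normSq a.im = normSq b.im := by
    rw [normSq_def', normSq_def', hre] at hn
    simp only [normSq_def', re_im, imI_im, imJ_im, imK_im]
    linarith
  obtain ⟨s, hs0, hs⟩ := exists_ne_zero_mul_eq_mul_of_re_eq_zero (re_im a) (re_im b) hnim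
  refine ⟨s, hs0, ?_⟩
  rw [← re_add_im a, ← re_add_im b, hre, add_mul, mul_add, coe_commutes, hs]

end Quaternion

section Sandwich

variable {l r x : ℍ[ℝ]} {T : ℍ[ℝ] →ₗ[ℝ] ℍ[ℝ]}

lemma involutive_of_mul_self_eq_neg_one (hl : l * l = -1) (hr : r * r = -1)
    (hT : ∀ q, T q = l * q * r⁻¹) : Function.Involutive T := by
  intro q
  rw [hT, hT, show l * (l * q * r⁻¹) * r⁻¹ = (l * l) * q * (r * r)⁻¹ by
    rw [mul_inv_rev]; noncomm_ring, hl, hr, inv_neg, inv_one]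
  noncomm_ring

lemma apply_mul_eq_neg_of_anticomm (hr : r ≠ 0) (hT : ∀ q, T q = l * q * r⁻¹)
    (hx : x * r = -(r * x)) (q : ℍ[ℝ]) : T (q * x) = -(T q * x) := by
  have hx' : x * r⁻¹ = -(r⁻¹ * x) := by
    calc x * r⁻¹ = r⁻¹ * (r * x) * r⁻¹ := by rw [← mul_assoc, inv_mul_cancel₀ hr, one_mul]
      _ = -(r⁻¹ * x) := by
        rw [← neg_eq_iff_eq_neg.2 hx, mul_neg, neg_mul, mul_assoc, mul_assoc,
          mul_inv_cancel₀ hr, mul_one]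
  rw [hT, hT, mul_assoc l, mul_assoc q, hx']
  noncomm_ring

end Sandwich

lemma add_apply_mem_ker_sub_id_inf {R V : Type*} [Ring R] [AddCommGroup V] [Module R V]
    {T₁ T₂ : V →ₗ[R] V} (h₁ : Function.Involutive T₁) (h₂ : Function.Involutive T₂) {s : V}
    (hs : T₁ (T₂ s) = s) :
    s + T₁ s ∈ LinearMap.ker (T₁ - LinearMap.id) ⊓ LinearMap.ker (T₂ - LinearMap.id) := by
  have h₂₁ : T₂ s = T₁ s := by rw [← h₁ (T₂ s), hs]
  refine Submodule.mem_inf.2 ⟨?_, ?_⟩ <;>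
    simp only [LinearMap.mem_ker, LinearMap.sub_apply, LinearMap.id_apply, map_add]
  · rw [h₁]; abel
  · rw [h₂₁, ← h₂₁, h₂]; abel

/-- Lemma on intersecting planes: if `l₁, r₁, l₂, r₂` are purely imaginary unit quaternions
with `re(l₁ l₂) = re(r₁ r₂)`, then the fixed-point subspaces of `q ↦ lᵢ q rᵢ⁻¹` have
nontrivial intersection. -/
theorem stmt_8 (l₁ r₁ l₂ r₂ : ℍ[ℝ])
    (hl₁0 : l₁.re = 0) (hl₁1 : ‖l₁‖ = 1) (hr₁0 : r₁.re = 0) (hr₁1 : ‖r₁‖ = 1)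
    (hl₂0 : l₂.re = 0) (hl₂1 : ‖l₂‖ = 1) (hr₂0 : r₂.re = 0) (hr₂1 : ‖r₂‖ = 1)
    (T₁ T₂ : ℍ[ℝ] →ₗ[ℝ] ℍ[ℝ])
    (hT₁ : ∀ q, T₁ q = l₁ * q * r₁⁻¹) (hT₂ : ∀ q, T₂ q = l₂ * q * r₂⁻¹)
    (hre : (l₁ * l₂).re = (r₁ * r₂).re) :
    LinearMap.ker (T₁ - LinearMap.id) ⊓ LinearMap.ker (T₂ - LinearMap.id) ≠ ⊥ := by
  have h₁ := involutive_of_mul_self_eq_neg_one (mul_self_eq_neg_one hl₁0 hl₁1)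
    (mul_self_eq_neg_one hr₁0 hr₁1) hT₁
  have h₂ := involutive_of_mul_self_eq_neg_one (mul_self_eq_neg_one hl₂0 hl₂1)
    (mul_self_eq_neg_one hr₂0 hr₂1) hT₂
  obtain ⟨s, hs0, hs⟩ := exists_ne_zero_mul_eq_mul_of_re_eq hre (by
    simp only [map_mul, normSq_eq_norm_mul_self, hl₁1, hl₂1, hr₁1, hr₂1])
  have hfix : T₁ (T₂ s) = s := by
    rw [hT₂, hT₁, show l₁ * (l₂ * s * r₂⁻¹) * r₁⁻¹ = l₁ * l₂ * s * (r₁ * r₂)⁻¹ by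
      rw [mul_inv_rev]; noncomm_ring, hs,
      mul_inv_cancel_right₀ (by rw [← norm_ne_zero_iff, norm_mul, hr₁1, hr₂1]; simp)]
  rw [Submodule.ne_bot_iff]
  by_cases hsum : s + T₁ s = 0
  · obtain ⟨x, hx0, hxre, hx₁, hx₂⟩ := exists_ne_zero_re_eq_zero_re_mul_eq_zero r₁ r₂
    have hneg₁ : T₁ s = -s := (neg_eq_of_add_eq_zero_right hsum).symm
    have hneg₂ : T₂ s = -s := by rw [← hneg₁, ← h₁ (T₂ s), hfix]
    refine ⟨s * x, Submodule.mem_inf.2 ⟨?_, ?_⟩, mul_ne_zero hs0 hx0⟩ <;>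
      simp only [LinearMap.mem_ker, LinearMap.sub_apply, LinearMap.id_apply]
    · rw [apply_mul_eq_neg_of_anticomm (by rintro rfl; simp at hr₁1) hT₁
        (mul_eq_neg_mul_of_re_mul_eq_zero hxre hr₁0 hx₁), hneg₁, neg_mul, neg_neg, sub_self]
    · rw [apply_mul_eq_neg_of_anticomm (by rintro rfl; simp at hr₂1) hT₂
        (mul_eq_neg_mul_of_re_mul_eq_zero hxre hr₂0 hx₂), hneg₂, neg_mul, neg_neg, sub_self]
  · exact ⟨_, add_apply_mem_ker_sub_id_inf h₁ h₂ hfix, hsum⟩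
end

section
/- Let p = (cos(π/n), 0, 0, sin(π/n)) and σ = (0, 1, 0, 0) be quaternions, where n ≥ 1 is an integer. Then the subgroup of unit quaternions generated by p and σ has order 4n, and σ * p * σ⁻¹ = p⁻¹. -/
/-!
Put `ζ = exp(iπ/n)`. Under the embedding `ℂ → ℍ`, `I ↦ k`, we have `p = ζ`, so `p` has order `2n`
and `p ^ n = -1 = σ ^ 2`; moreover `σ z = conj z σ` for `z ∈ ℂ`, and `conj ζ = ζ⁻¹`, so
`σ p = p⁻¹ σ`. These are the defining relations of the dicyclic group `QuaternionGroup n`, so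
`a i ↦ p ^ i`, `xa i ↦ σ p ^ i` is a homomorphism onto the closure of `{p, σ}`. It is injective
because `p` has order `2n` and `σ` is not a power of `p` (powers of `p` have vanishing
`i`-component), hence the closure has `4n` elements.
-/

open Quaternion ComplexConjugate

theorem zpow_eq_zpow_of_intCast_eq {G : Type*} [Group G] {a : G} {m : ℕ} (ha : a ^ m = 1)
    {k l : ℤ} (h : (k : ZMod m) = l) : a ^ k = a ^ l := by
  rw [ZMod.intCast_eq_intCast_iff] at h
  exact zpow_eq_zpow_iff_modEq.mpr <|
    h.of_dvd <| Int.natCast_dvd_natCast.mpr <| orderOf_dvd_of_pow_eq_one ha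

namespace QuaternionGroup

variable {G : Type*} [Group G] {n : ℕ} {a x : G}

def lift (ha : a ^ (2 * n) = 1) (hx : x ^ 2 = a ^ n) (hxa : x * a = a⁻¹ * x) :
    QuaternionGroup n →* G where
  toFun
    | .a i => a ^ (i.cast : ℤ)
    | .xa i => x * a ^ (i.cast : ℤ)
  map_one' := by
    show a ^ ((0 : ZMod (2 * n)).cast : ℤ) = 1
    rw [ZMod.cast_zero, zpow_zero]
  map_mul' := by
    have hcongr := @zpow_eq_zpow_of_intCast_eq _ _ _ _ ha
    have hcomm (k : ℤ) : a ^ k * x = x * a ^ (-k) := by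
      rw [(SemiconjBy.zpow_right hxa (-k)).eq, inv_zpow', neg_neg]
    rintro (i | i) (j | j)
    · show a ^ _ = a ^ _ * a ^ _
      rw [← zpow_add]
      apply hcongr
      push_cast [ZMod.intCast_zmod_cast]
      rfl
    · show x * a ^ _ = a ^ _ * (x * a ^ _)
      rw [← mul_assoc, hcomm, mul_assoc, ← zpow_add]
      congr 1
      apply hcongr
      push_cast [ZMod.intCast_zmod_cast]
      ring
    · show x * a ^ _ = x * a ^ _ * a ^ _
      rw [mul_assoc, ← zpow_add]
      congr 1
      apply hcongr
      push_cast [ZMod.intCast_zmod_cast]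
      rfl
    · show a ^ _ = x * a ^ _ * (x * a ^ _)
      rw [mul_assoc, ← mul_assoc (a ^ _), hcomm, ← mul_assoc, ← mul_assoc, ← sq, hx,
        mul_assoc, ← zpow_natCast, ← zpow_add, ← zpow_add]
      apply hcongr
      push_cast [ZMod.intCast_zmod_cast]
      ring

section Lift

variable (ha : a ^ (2 * n) = 1) (hx : x ^ 2 = a ^ n) (hxa : x * a = a⁻¹ * x)

@[simp]
theorem lift_a (i : ZMod (2 * n)) : lift ha hx hxa (.a i) = a ^ (i.cast : ℤ) := rfl

@[simp]
theorem lift_xa (i : ZMod (2 * n)) : lift ha hx hxa (.xa i) = x * a ^ (i.cast : ℤ) := rfl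

theorem range_lift : (lift ha hx hxa).range = Subgroup.closure {a, x} := by
  have haS : a ∈ Subgroup.closure {a, x} := Subgroup.subset_closure (by simp)
  have hxS : x ∈ Subgroup.closure {a, x} := Subgroup.subset_closure (by simp)
  apply le_antisymm
  · rintro _ ⟨i | i, rfl⟩
    · exact zpow_mem haS _
    · exact mul_mem hxS (zpow_mem haS _)
  · rw [Subgroup.closure_le, Set.insert_subset_iff, Set.singleton_subset_iff]
    constructor
    · refine ⟨.a 1, (zpow_eq_zpow_of_intCast_eq ha ?_).trans (zpow_one a)⟩
      rw [ZMod.intCast_zmod_cast, Int.cast_one]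
    · exact ⟨.xa 0, by simp⟩

theorem lift_injective (hord : orderOf a = 2 * n) (hxz : x ∉ Subgroup.zpowers a) :
    Function.Injective (lift ha hx hxa) := by
  rw [injective_iff_map_eq_one]
  rintro (i | i) h
  · rw [lift_a, ← orderOf_dvd_iff_zpow_eq_one, hord, ← ZMod.intCast_zmod_eq_zero_iff_dvd,
      ZMod.intCast_zmod_cast] at h
    rw [h, a_zero]
  · rw [lift_xa, mul_eq_one_iff_eq_inv, ← zpow_neg] at h
    exact absurd (h ▸ Subgroup.zpow_mem_zpowers a _) hxz

end Lift

theorem card_closure_eq_four_mul [NeZero n] (hord : orderOf a = 2 * n) (hx : x ^ 2 = a ^ n)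
    (hxa : x * a = a⁻¹ * x) (hxz : x ∉ Subgroup.zpowers a) :
    Nat.card (Subgroup.closure {a, x}) = 4 * n := by
  have ha : a ^ (2 * n) = 1 := hord ▸ pow_orderOf_eq_one a
  rw [← range_lift ha hx hxa,
    ← Nat.card_congr (MonoidHom.ofInjective (lift_injective ha hx hxa hord hxz)).toEquiv,
    Nat.card_eq_fintype_card, card]

end QuaternionGroup

-- Mathlib's `QuaternionAlgebra.mk_mul_mk` does not fire on products formed in `ℍ[R]`, which is a
-- `def` rather than an `abbrev`.
theorem Quaternion.mk_mul_mk {R : Type*} [CommRing R] (a₁ a₂ a₃ a₄ b₁ b₂ b₃ b₄ : R) :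
    (⟨a₁, a₂, a₃, a₄⟩ * ⟨b₁, b₂, b₃, b₄⟩ : ℍ[R]) =
      ⟨a₁ * b₁ - a₂ * b₂ - a₃ * b₃ - a₄ * b₄, a₁ * b₂ + a₂ * b₁ + a₃ * b₄ - a₄ * b₃,
        a₁ * b₃ - a₂ * b₄ + a₃ * b₁ + a₄ * b₂, a₁ * b₄ + a₂ * b₃ - a₃ * b₂ + a₄ * b₁⟩ := by
  show QuaternionAlgebra.mk _ _ _ _ = _
  congr 1 <;> ring

noncomputable def Quaternion.ofComplexK : ℂ →ₐ[ℝ] ℍ[ℝ] where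
  toFun z := ⟨z.re, 0, 0, z.im⟩
  map_one' := rfl
  map_zero' := rfl
  map_mul' z w := by rw [mk_mul_mk]; ext <;> simp
  map_add' z w := by
    show _ = QuaternionAlgebra.mk _ _ _ _
    congr 1 <;> simp
  commutes' _ := rfl

theorem Quaternion.ofComplexK_apply (z : ℂ) : ofComplexK z = ⟨z.re, 0, 0, z.im⟩ := rfl

theorem Quaternion.i_mul_ofComplexK (z : ℂ) :
    ⟨0, 1, 0, 0⟩ * ofComplexK z = ofComplexK (conj z) * ⟨0, 1, 0, 0⟩ := by
  rw [ofComplexK_apply, ofComplexK_apply, mk_mul_mk, mk_mul_mk]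
  ext <;> simp

theorem Metric.unitSphere.orderOf_coe {𝕜 : Type*} [NormedDivisionRing 𝕜]
    (x : Metric.sphere (0 : 𝕜) 1) : orderOf (x : 𝕜) = orderOf x := by
  rw [← orderOf_injective _ unitSphereToUnits_injective x, ← orderOf_units,
    unitSphereToUnits_apply_coe]

theorem Complex.isPrimitiveRoot_exp_pi_div {n : ℕ} (hn : n ≠ 0) :
    IsPrimitiveRoot (exp (↑(Real.pi / n) * I)) (2 * n) := by
  convert isPrimitiveRoot_exp (2 * n) (by positivity) using 2
  push_cast
  field_simp

section UnitQuaternions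

variable {p σ : Metric.sphere (0 : ℍ[ℝ]) 1} {z : ℂ}
  (hp : (p : ℍ[ℝ]) = ofComplexK z) (hσ : (σ : ℍ[ℝ]) = ⟨0, 1, 0, 0⟩)
include hp

theorem orderOf_eq_of_coe_eq_ofComplexK : orderOf p = orderOf z := by
  rw [← Metric.unitSphere.orderOf_coe, hp]
  exact orderOf_injective (ofComplexK : ℂ →* ℍ[ℝ]) ofComplexK.toRingHom.injective z

include hσ

theorem mul_eq_inv_mul_of_coe_eq_ofComplexK (hz : ‖z‖ = 1) : σ * p = p⁻¹ * σ := by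
  ext1
  rw [Metric.unitSphere.coe_mul, Metric.unitSphere.coe_mul, Metric.unitSphere.coe_inv, hp, hσ,
    i_mul_ofComplexK, ← Complex.inv_eq_conj hz, map_inv₀]

theorem notMem_zpowers_of_coe_eq_ofComplexK : σ ∉ Subgroup.zpowers p := by
  rintro ⟨k, hk⟩
  have hk_imI := congrArg (fun q : Metric.sphere (0 : ℍ[ℝ]) 1 => (q : ℍ[ℝ]).imI) hk
  rw [Metric.unitSphere.coe_zpow, hp, ← map_zpow₀, ofComplexK_apply, hσ] at hk_imI
  exact zero_ne_one hk_imI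

theorem sq_eq_pow_of_coe_eq_ofComplexK {n : ℕ} (hz : z ^ n = -1) : σ ^ 2 = p ^ n := by
  ext1
  rw [sq, Metric.unitSphere.coe_mul, Metric.unitSphere.coe_pow, hp, hσ, mk_mul_mk, ← map_pow,
    hz, map_neg, map_one]
  ext <;> simp

end UnitQuaternions

/-- With `p = (cos(π/n), 0, 0, sin(π/n))` and `σ = i`, the subgroup of unit quaternions
generated by `p` and `σ` has order `4n`, and `σ p σ⁻¹ = p⁻¹`. -/
theorem stmt_11 (n : ℕ) (hn : 1 ≤ n) (p σ : Metric.sphere (0 : ℍ[ℝ]) 1)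
    (hp : (p : ℍ[ℝ]) = ⟨Real.cos (Real.pi / n), 0, 0, Real.sin (Real.pi / n)⟩)
    (hσ : (σ : ℍ[ℝ]) = ⟨0, 1, 0, 0⟩) :
    Nat.card (Subgroup.closure {p, σ}) = 4 * n ∧ σ * p * σ⁻¹ = p⁻¹ := by
  have hn0 : n ≠ 0 := Nat.one_le_iff_ne_zero.mp hn
  have : NeZero n := ⟨hn0⟩
  set ζ := Complex.exp (↑(Real.pi / n) * Complex.I)
  have hζ : IsPrimitiveRoot ζ (2 * n) := Complex.isPrimitiveRoot_exp_pi_div hn0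
  have hζn : ζ ^ n = -1 := by
    refine IsPrimitiveRoot.eq_neg_one_of_two_right ?_
    simpa [hn0] using hζ.pow_of_dvd hn0 (dvd_mul_left n 2)
  replace hp : (p : ℍ[ℝ]) = ofComplexK ζ := by
    rw [hp, ofComplexK_apply, Complex.exp_ofReal_mul_I_re, Complex.exp_ofReal_mul_I_im]
  have hσp : σ * p = p⁻¹ * σ :=
    mul_eq_inv_mul_of_coe_eq_ofComplexK hp hσ (Complex.norm_exp_ofReal_mul_I _)
  have hord : orderOf p = 2 * n := by rw [orderOf_eq_of_coe_eq_ofComplexK hp, hζ.eq_orderOf]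
  exact ⟨QuaternionGroup.card_closure_eq_four_mul hord (sq_eq_pow_of_coe_eq_ofComplexK hp hσ hζn)
    hσp (notMem_zpowers_of_coe_eq_ofComplexK hp hσ), by rw [hσp, mul_inv_cancel_right]⟩
end

section
/- Let l = (cos α, sin α · v) and r = (cos β, sin β · w) be unit quaternions with v, w purely imaginary unit quaternions, and consider the rotation g : q ↦ l q r⁻¹ of ℍ ≅ ℝ⁴. If cos α = cos β and g is not the identity, then the fixed-point subspace of g has dimension 2. -/
/-!
Write `l = c + s v` and `r = c + s' w` with `s' = ±s`. The case `s = 0` makes `g` the identity;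
otherwise `l q = q r` reduces to `v q = q w'` with `w' = ±w`, again a unit imaginary quaternion.
Since `v² = w'² = -1`, the map `q ↦ v q w'` is an involution of `ℍ` whose `-1`-eigenspace is
`{q | v q = q w'}` and whose `+1`-eigenspace is `{q | v q = -q w'}`. Left multiplication by a
nonzero `u` anticommuting with `v` (an imaginary quaternion orthogonal to `v`) swaps the two
eigenspaces, so each has half of the dimension `4`.
-/

open Quaternion
open LinearMap (ker mulLeft mulRight)

section
variable {K A : Type*} [Field K] [Ring A] [Algebra K A]

theorem mem_ker_mulLeft_sub_mulRight {v w q : A} :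
    q ∈ ker (mulLeft K v - mulRight K w) ↔ v * q = q * w := by
  simp [sub_eq_zero]

theorem finrank_ker_mulLeft_sub_mulRight_le_neg [FiniteDimensional K A] {u v w : A}
    (hu : IsUnit u) (huv : u * v = -(v * u)) :
    Module.finrank K (ker (mulLeft K v - mulRight K w)) ≤
      Module.finrank K (ker (mulLeft K v - mulRight K (-w))) := by
  have hmaps : ∀ q ∈ ker (mulLeft K v - mulRight K w),
      mulLeft K u q ∈ ker (mulLeft K v - mulRight K (-w)) := by
    intro q hq
    rw [mem_ker_mulLeft_sub_mulRight] at hq ⊢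
    rw [LinearMap.mulLeft_apply, ← mul_assoc, ← neg_neg (v * u), ← huv, neg_mul, mul_assoc,
      hq]
    noncomm_ring
  refine LinearMap.finrank_le_finrank_of_injective (f := (mulLeft K u).restrict hmaps) ?_
  intro q q' h
  exact Subtype.ext (hu.mul_right_injective (congrArg Subtype.val h))

theorem isCompl_ker_mulLeft_sub_mulRight_neg [NeZero (2 : K)] {v w : A}
    (hv : v * v = -1) (hw : w * w = -1) :
    IsCompl (ker (mulLeft K v - mulRight K w)) (ker (mulLeft K v - mulRight K (-w))) := by
  constructor
  · rw [Submodule.disjoint_def]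
    intro q hq hq'
    rw [mem_ker_mulLeft_sub_mulRight] at hq hq'
    have hqw : (2 : K) • (q * w) = 0 := by
      rw [two_smul]; nth_rewrite 1 [← hq]; rw [hq', mul_neg, neg_add_cancel]
    calc q = -(q * w * w) := by rw [mul_assoc, hw, mul_neg_one, neg_neg]
      _ = 0 := by rw [(smul_eq_zero.mp hqw).resolve_left two_ne_zero, zero_mul, neg_zero]
  · rw [codisjoint_iff, eq_top_iff]
    intro q _
    have hsplit : q = (2 : K)⁻¹ • (q - v * q * w) + (2 : K)⁻¹ • (q + v * q * w) := by
      rw [← smul_add, sub_add_add_cancel, ← two_smul K, smul_smul,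
        inv_mul_cancel₀ two_ne_zero, one_smul]
    rw [hsplit]
    refine Submodule.add_mem_sup ?_ ?_ <;>
      rw [mem_ker_mulLeft_sub_mulRight, mul_smul_comm, smul_mul_assoc] <;> congr 1
    · calc v * (q - v * q * w) = v * q - (v * v) * q * w := by noncomm_ring
        _ = q * w - v * q * (w * w) := by rw [hv, hw]; noncomm_ring
        _ = _ := by noncomm_ring
    · calc v * (q + v * q * w) = v * q + (v * v) * q * w := by noncomm_ring
        _ = -(q * w) - v * q * (w * w) := by rw [hv, hw]; noncomm_ring
        _ = _ := by noncomm_ring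

theorem two_mul_finrank_ker_mulLeft_sub_mulRight [FiniteDimensional K A] [NeZero (2 : K)]
    {u v w : A} (hv : v * v = -1) (hw : w * w = -1) (hu : IsUnit u) (huv : u * v = -(v * u)) :
    2 * Module.finrank K (ker (mulLeft K v - mulRight K w)) =
      Module.finrank K A := by
  have hle := finrank_ker_mulLeft_sub_mulRight_le_neg (K := K) (w := w) hu huv
  have hge := finrank_ker_mulLeft_sub_mulRight_le_neg (K := K) (w := -w) hu huv
  rw [neg_neg] at hge
  have := Submodule.finrank_add_eq_of_isCompl (isCompl_ker_mulLeft_sub_mulRight_neg (K := K) hv hw)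
  omega

end

namespace Quaternion
variable {R : Type*} [CommRing R]

theorem mul_eq_neg_mul_of_re_eq_zero {u v : ℍ[R]} (hu : u.re = 0) (hv : v.re = 0)
    (huv : u.imI * v.imI + u.imJ * v.imJ + u.imK * v.imK = 0) : u * v = -(v * u) := by
  ext
  · simp only [re_mul, re_neg, hu, hv]
    linear_combination -2 * huv
  all_goals simp only [imI_mul, imJ_mul, imK_mul, imI_neg, imJ_neg, imK_neg, hu, hv]; ring

theorem exists_ne_zero_mul_eq_neg_mul [Nontrivial R] {v : ℍ[R]}
    (hv : v.re = 0) : ∃ u ≠ 0, u * v = -(v * u) := by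
  by_cases hij : v.imI = 0 ∧ v.imJ = 0
  · refine ⟨⟨0, 1, 0, 0⟩, fun h => by simpa using congrArg QuaternionAlgebra.imI h,
      mul_eq_neg_mul_of_re_eq_zero rfl hv ?_⟩
    simp [hij.1]
  · refine ⟨⟨0, v.imJ, -v.imI, 0⟩, fun h => hij ?_, mul_eq_neg_mul_of_re_eq_zero rfl hv ?_⟩
    · exact ⟨by simpa using congrArg QuaternionAlgebra.imJ h,
        by simpa using congrArg QuaternionAlgebra.imI h⟩
    · simp only; ring

theorem mul_self_eq_neg_one_s15 {v : ℍ[ℝ]} (hre : v.re = 0) (hnorm : ‖v‖ = 1) : v * v = -1 := by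
  rw [← sq, sq_eq_neg_normSq.mpr hre, normSq_eq_norm_mul_self, hnorm, mul_one, coe_one]

theorem finrank_ker_mulLeft_sub_mulRight {v w : ℍ[ℝ]} (hv0 : v.re = 0) (hv1 : ‖v‖ = 1)
    (hw0 : w.re = 0) (hw1 : ‖w‖ = 1) :
    Module.finrank ℝ (ker (mulLeft ℝ v - mulRight ℝ w)) = 2 := by
  obtain ⟨u, hu, huv⟩ := exists_ne_zero_mul_eq_neg_mul hv0
  have := two_mul_finrank_ker_mulLeft_sub_mulRight (K := ℝ)
    (mul_self_eq_neg_one_s15 hv0 hv1) (mul_self_eq_neg_one_s15 hw0 hw1) hu.isUnit huv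
  rw [finrank_eq_four] at this
  omega

theorem add_smul_mul_mul_inv_eq_self_iff {c s : ℝ} {v w q : ℍ[ℝ]} (hs : s ≠ 0)
    (hw0 : w.re = 0) (hw : w ≠ 0) :
    ((c : ℍ[ℝ]) + s • v) * q * ((c : ℍ[ℝ]) + s • w)⁻¹ = q ↔ v * q = q * w := by
  have hr : (c : ℍ[ℝ]) + s • w ≠ 0 := by
    intro h
    have him := congrArg im h
    have hwim : w.im = w := by simpa [hw0] using re_add_im w
    rw [im_add, im_coe, zero_add, im_smul, hwim, im_zero] at him
    exact smul_ne_zero hs hw him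
  rw [mul_inv_eq_iff_eq_mul₀ hr, add_mul, mul_add, coe_commutes, add_right_inj, smul_mul_assoc,
    mul_smul_comm]
  exact smul_right_injective ℍ[ℝ] hs |>.eq_iff

end Quaternion

/-- If `l = cos α + sin α • v` and `r = cos β + sin β • w` with `v, w` purely imaginary unit
quaternions, `cos α = cos β`, and the rotation `q ↦ l q r⁻¹` is not the identity, then its
fixed-point subspace has dimension 2. -/
theorem stmt_15 (α β : ℝ) (v w l r : ℍ[ℝ])
    (hv0 : v.re = 0) (hv1 : ‖v‖ = 1) (hw0 : w.re = 0) (hw1 : ‖w‖ = 1)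
    (hl : l = (Real.cos α : ℍ[ℝ]) + Real.sin α • v)
    (hr : r = (Real.cos β : ℍ[ℝ]) + Real.sin β • w)
    (T : ℍ[ℝ] →ₗ[ℝ] ℍ[ℝ]) (hT : ∀ q, T q = l * q * r⁻¹)
    (hcos : Real.cos α = Real.cos β)
    (hnid : ∃ q : ℍ[ℝ], l * q * r⁻¹ ≠ q) :
    Module.finrank ℝ ↥(LinearMap.ker (T - LinearMap.id)) = 2 := by
  have hsin_sq : Real.sin β ^ 2 = Real.sin α ^ 2 := by rw [Real.sin_sq, Real.sin_sq, hcos]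
  have hsα : Real.sin α ≠ 0 := by
    intro hsα
    obtain ⟨q, hq⟩ := hnid
    have hsβ : Real.sin β = 0 := by simpa [hsα] using hsin_sq
    have hc : Real.cos α ≠ 0 := by
      intro hc
      simpa [hsα, hc] using Real.sin_sq_add_cos_sq α
    apply hq
    rw [hl, hr, hsα, hsβ, ← hcos, zero_smul, zero_smul, add_zero, coe_commutes,
      mul_inv_cancel_right₀ (by rwa [Ne, ← coe_zero, coe_inj])]
  obtain ⟨w', hw'0, hw'1, hw'⟩ : ∃ w' : ℍ[ℝ], w'.re = 0 ∧ ‖w'‖ = 1 ∧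
      Real.sin β • w = Real.sin α • w' := by
    rcases sq_eq_sq_iff_eq_or_eq_neg.mp hsin_sq with h | h
    · exact ⟨w, hw0, hw1, by rw [h]⟩
    · exact ⟨-w, by rw [re_neg, hw0, neg_zero], by rw [norm_neg, hw1],
        by rw [h, neg_smul, smul_neg]⟩
  have hker : ker (T - LinearMap.id) =
      ker (mulLeft ℝ v - mulRight ℝ w') := by
    ext q
    rw [mem_ker_mulLeft_sub_mulRight, LinearMap.mem_ker, LinearMap.sub_apply, LinearMap.id_apply,
      sub_eq_zero, hT, hl, hr, hw', ← hcos]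
    exact add_smul_mul_mul_inv_eq_self_iff hsα hw'0 (by rintro rfl; simp at hw'1)
  rw [hker]
  exact finrank_ker_mulLeft_sub_mulRight hv0 hv1 hw'0 hw'1
end

section
/- Every polynomial map f : ℝ⁴ → ℝ⁴ that is equivariant with respect to the group Γ₀ generated by the sign-change maps (x₁,x₂,x₃,x₄) ↦ (x₁,x₂,-x₃,-x₄), (-x₁,x₂,x₃,-x₄), (-x₁,-x₂,x₃,x₄) has first component of the form a₁·x₁ + b₁·x₂x₃x₄, where a₁ and b₁ are polynomials in x₁², x₂², x₃², x₄² and θ = x₁x₂x₃x₄. -/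
/-!
A diagonal sign change `x ↦ εx` multiplies the monomial `x^α` by `∏ εᵢ^αᵢ`, while equivariance
forces it to multiply the first component `F 0` by `ε₀`. Comparing coefficients for the three
generators of `Γ₀`, every exponent `α` occurring in `F 0` has parity pattern `(1,0,0,0)` or
`(0,1,1,1)`, so each of its monomials is `x₁` or `x₂x₃x₄` times a monomial in the squares.
-/

open MvPolynomial

variable {R σ : Type*} [Fintype σ]

theorem bind₁_C_mul_X_monomial [CommSemiring R] (ε : σ → R) (d : σ →₀ ℕ) (r : R) :
    bind₁ (fun i => C (ε i) * X i) (monomial d r) = monomial d ((∏ i, ε i ^ d i) * r) := by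
  rw [bind₁_monomial, monomial_eq, Finsupp.prod_fintype _ _ (fun _ => pow_zero _),
    Finset.prod_subset d.support.subset_univ
      (fun i _ hi => by simp [Finsupp.notMem_support_iff.mp hi])]
  simp only [mul_pow, Finset.prod_mul_distrib, ← map_pow, ← map_prod, map_mul]
  ring

theorem coeff_bind₁_C_mul_X [CommSemiring R] (ε : σ → R) (P : MvPolynomial σ R) (α : σ →₀ ℕ) :
    coeff α (bind₁ (fun i => C (ε i) * X i) P) = (∏ i, ε i ^ α i) * coeff α P := by
  classical
  induction P using MvPolynomial.induction_on' with
  | monomial d r =>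
    rw [bind₁_C_mul_X_monomial, coeff_monomial, coeff_monomial]
    split_ifs with h
    · rw [h]
    · rw [mul_zero]
  | add p q hp hq => rw [map_add, coeff_add, coeff_add, hp, hq, mul_add]

theorem prod_pow_eq_of_mem_support [CommRing R] [IsDomain R] [Infinite R] {ε : σ → R} {s : R}
    {P : MvPolynomial σ R} (hP : ∀ x, eval (fun i => ε i * x i) P = s * eval x P)
    {α : σ →₀ ℕ} (hα : α ∈ P.support) : ∏ i, ε i ^ α i = s := by
  have hbind : bind₁ (fun i => C (ε i) * X i) P = C s * P := by
    apply MvPolynomial.funext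
    intro x
    change aeval x _ = aeval x _
    simpa [aeval_bind₁] using hP x
  have := congrArg (coeff α) hbind
  rw [coeff_bind₁_C_mul_X, coeff_C_mul] at this
  exact mul_right_cancel₀ (mem_support_iff.mp hα) this

theorem even_sum_add_of_mem_support [CommRing R] [IsDomain R] [CharZero R] [DecidableEq σ]
    {t : Finset σ} {k : ℕ} {P : MvPolynomial σ R}
    (hP : ∀ x, eval (fun i => if i ∈ t then -x i else x i) P = (-1) ^ k * eval x P)
    {α : σ →₀ ℕ} (hα : α ∈ P.support) : Even (∑ i ∈ t, α i + k) := by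
  have hprod := prod_pow_eq_of_mem_support (ε := fun i => if i ∈ t then -1 else 1)
    (fun x => by simpa only [ite_mul, neg_one_mul, one_mul] using hP x) hα
  simp only [ite_pow, one_pow, Finset.prod_ite_mem, Finset.univ_inter,
    Finset.prod_pow_eq_pow_sum] at hprod
  rw [← neg_one_pow_eq_one_iff_even (R := R) (by norm_num), pow_add, hprod, ← pow_add,
    ← two_mul, pow_mul, neg_one_sq, one_pow]

theorem exists_eval_sq_mul_eq_sum [CommSemiring R] (c : (σ →₀ ℕ) → R) (s : Finset (σ →₀ ℕ))
    (δ : σ → ℕ) (h : ∀ α ∈ s, ∀ i, α i % 2 = δ i) :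
    ∃ Q : MvPolynomial σ R, ∀ x : σ → R,
      ∑ α ∈ s, c α * ∏ i, x i ^ α i = eval (fun i => x i ^ 2) Q * ∏ i, x i ^ δ i := by
  refine ⟨∑ α ∈ s, monomial (α.mapRange (· / 2) (Nat.zero_div 2)) (c α), fun x => ?_⟩
  rw [map_sum, Finset.sum_mul]
  refine Finset.sum_congr rfl fun α hα => ?_
  rw [eval_monomial, Finsupp.prod_fintype _ _ (fun _ => pow_zero _), mul_assoc,
    ← Finset.prod_mul_distrib]
  congr 1
  refine Finset.prod_congr rfl fun i _ => ?_
  rw [Finsupp.mapRange_apply, ← pow_mul, ← pow_add, ← h α hα i, Nat.div_add_mod]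

theorem mod_two_eq_of_even_add {a : Fin 4 → ℕ} (h₂₃ : Even (a 2 + a 3))
    (h₀₃ : Even (a 0 + a 3 + 1)) (h₀₁ : Even (a 0 + a 1 + 1)) (i : Fin 4) :
    a i % 2 = (if a 0 % 2 = 1 then ![1, 0, 0, 0] else ![0, 1, 1, 1]) i := by
  rw [Nat.even_iff] at h₂₃ h₀₃ h₀₁
  split_ifs <;> fin_cases i <;> simp <;> omega

/-- The first component of any `Γ₀`-equivariant polynomial map `f : ℝ⁴ → ℝ⁴` has the form
`a₁ x₁ + b₁ x₂ x₃ x₄` where `a₁, b₁` are polynomials in `x₁², x₂², x₃², x₄²` and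
`θ = x₁ x₂ x₃ x₄`. -/
theorem stmt_18 (f : (Fin 4 → ℝ) → (Fin 4 → ℝ))
    (F : Fin 4 → MvPolynomial (Fin 4) ℝ)
    (hF : ∀ (x : Fin 4 → ℝ) (i : Fin 4), f x i = MvPolynomial.eval x (F i))
    (h₁ : ∀ x : Fin 4 → ℝ,
      f ![x 0, x 1, -x 2, -x 3] = ![f x 0, f x 1, -(f x 2), -(f x 3)])
    (h₂ : ∀ x : Fin 4 → ℝ,
      f ![-x 0, x 1, x 2, -x 3] = ![-(f x 0), f x 1, f x 2, -(f x 3)])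
    (h₃ : ∀ x : Fin 4 → ℝ,
      f ![-x 0, -x 1, x 2, x 3] = ![-(f x 0), -(f x 1), f x 2, f x 3]) :
    ∃ a b : MvPolynomial (Fin 5) ℝ, ∀ x : Fin 4 → ℝ,
      f x 0 =
        MvPolynomial.eval
            ![x 0 ^ 2, x 1 ^ 2, x 2 ^ 2, x 3 ^ 2, x 0 * x 1 * x 2 * x 3] a * x 0 +
        MvPolynomial.eval
            ![x 0 ^ 2, x 1 ^ 2, x 2 ^ 2, x 3 ^ 2, x 0 * x 1 * x 2 * x 3] b *
          (x 1 * x 2 * x 3) := by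
  set P := F 0
  have hsign (t : Finset (Fin 4)) (k : ℕ) (y : (Fin 4 → ℝ) → Fin 4 → ℝ)
      (hy : ∀ x, y x = fun i => if i ∈ t then -x i else x i)
      (hfy : ∀ x, f (y x) 0 = (-1) ^ k * f x 0) (α) (hα : α ∈ P.support) :
      Even (∑ i ∈ t, α i + k) :=
    even_sum_add_of_mem_support (fun x => by rw [← hy, ← hF, ← hF, hfy]) hα
  have hpar (α) (hα : α ∈ P.support) (i : Fin 4) :
      α i % 2 = (if α 0 % 2 = 1 then ![1, 0, 0, 0] else ![0, 1, 1, 1]) i := by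
    apply mod_two_eq_of_even_add
    · simpa using hsign {2, 3} 0 (fun x => ![x 0, x 1, -x 2, -x 3])
        (fun x => by ext j; fin_cases j <;> simp)
        (fun x => by simpa using congrFun (h₁ x) 0) α hα
    · simpa using hsign {0, 3} 1 (fun x => ![-x 0, x 1, x 2, -x 3])
        (fun x => by ext j; fin_cases j <;> simp)
        (fun x => by simpa using congrFun (h₂ x) 0) α hα
    · simpa using hsign {0, 1} 1 (fun x => ![-x 0, -x 1, x 2, x 3])
        (fun x => by ext j; fin_cases j <;> simp)
        (fun x => by simpa using congrFun (h₃ x) 0) α hα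
  obtain ⟨A, hA⟩ := exists_eval_sq_mul_eq_sum (coeff · P)
    (P.support.filter (fun α => α 0 % 2 = 1)) ![1, 0, 0, 0]
    (fun α hα i => by rw [Finset.mem_filter] at hα; simpa [hα.2] using hpar α hα.1 i)
  obtain ⟨B, hB⟩ := exists_eval_sq_mul_eq_sum (coeff · P)
    (P.support.filter (fun α => ¬α 0 % 2 = 1)) ![0, 1, 1, 1]
    (fun α hα i => by rw [Finset.mem_filter] at hα; simpa [hα.2] using hpar α hα.1 i)
  refine ⟨rename Fin.castSucc A, rename Fin.castSucc B, fun x => ?_⟩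
  have hsq : ![x 0 ^ 2, x 1 ^ 2, x 2 ^ 2, x 3 ^ 2, x 0 * x 1 * x 2 * x 3] ∘ Fin.castSucc =
      fun i => x i ^ 2 := by
    ext i; fin_cases i <;> rfl
  rw [eval_rename, eval_rename, hsq, hF, eval_eq', ← Finset.sum_filter_add_sum_filter_not _
    (fun α => α 0 % 2 = 1), hA, hB]
  simp [Fin.prod_univ_four, mul_assoc]
end
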